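/- Let (γ_n) be a sequence in ℂ with 0 < |γ_n| < 1 for all n and γ_n → 0. For each n let δ_n be the unique root of the kernel equation (in δ) with 0 < |δ_n| < |γ_n|, and let γ̂_n be the unique root of the kernel equation with δ = δ_n (in γ) satisfying 0 < |γ̂_n| < |δ_n|. Let w and ŵ be the two roots of the quadratic λ(a²+ā²)·w² − (1 − (λ̄(ā²+a²) + λaā))·w + λ̄āa = 0 with |w| < 1 < |ŵ|. Then δ_n/γ_n → w and γ̂_n/δ_n → 1/ŵ as n → ∞. -/

import Mathlib

/-- The kernel equation in (γ, δ) ∈ ℂ². -/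
def Kernel (a lam : ℝ) (g d : ℂ) : Prop :=
  (1 - ((1-(lam:ℂ))*((1-(a:ℂ))^2+(a:ℂ)^2) + (lam:ℂ)*(a:ℂ)*(1-(a:ℂ)))) * g * d
    = ((1-(lam:ℂ))*(1-(a:ℂ))*(a:ℂ)*g + (lam:ℂ)*((a:ℂ)^2+(1-(a:ℂ))^2)) * d^2
      + (lam:ℂ)*(1-(a:ℂ))*(a:ℂ)*d^3 + (1-(lam:ℂ))*(1-(a:ℂ))*(a:ℂ)*g^2

/-!
Write the kernel equation as `C γ δ = (B γ + A) δ² + E δ³ + B γ²`, so that `w` and `ŵ` are the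
roots of `A x² − C x + B`. Dividing by `γ²` shows that `r = δ/γ` satisfies
`A (r − w)(r − ŵ) = −γ r² (B + E r)`; since `|r| < 1 < |ŵ|`, the factor `r − ŵ` stays away from
zero and `|r − w| = O(|γ|)`. Dividing instead by `δ²`, `s = γ̂/δ` satisfies
`A (ŵ s − 1)(w s − 1) = −δ (B s + E)`, and now `w s − 1` stays away from zero since `|s| < 1`
and `|w| < 1`, so `|s − 1/ŵ| = O(|δ|)`.
-/

open Filter Topology Asymptotics

lemma tendsto_of_norm_sub_le_mul {α E F : Type*} [NormedAddCommGroup E]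
    [NormedAddCommGroup F] {l : Filter α} {u : α → E} {t : E} {g : α → F} (K : ℝ)
    (hg : Tendsto g l (𝓝 0)) (h : ∀ n, ‖u n - t‖ ≤ K * ‖g n‖) : Tendsto u l (𝓝 t) :=
  tendsto_sub_nhds_zero_iff.mp ((IsBigO.of_bound K (Eventually.of_forall h)).trans_tendsto hg)

lemma coeffs_eq_of_quadratic_roots {K : Type*} [Field K] {A B C w w' : K}
    (hw : A * w ^ 2 - C * w + B = 0) (hw' : A * w' ^ 2 - C * w' + B = 0) (hne : w ≠ w') :
    C = A * (w + w') ∧ B = A * (w * w') := by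
  have hC : C = A * (w + w') :=
    mul_right_cancel₀ (sub_ne_zero.mpr hne) (by linear_combination hw' - hw)
  exact ⟨hC, by linear_combination hw + w * hC⟩

section NormedField

variable {𝕜 : Type*} [NormedField 𝕜]

lemma norm_le_norm_mul_mul_div {A x y : 𝕜} {c : ℝ} (hA : A ≠ 0) (hc : 0 < c)
    (hy : c ≤ ‖y‖) : ‖x‖ ≤ ‖A * x * y‖ / (‖A‖ * c) := by
  rw [le_div_iff₀ (mul_pos (norm_pos_iff.mpr hA) hc), norm_mul, norm_mul]
  calc ‖x‖ * (‖A‖ * c) = ‖A‖ * ‖x‖ * c := by ring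
    _ ≤ ‖A‖ * ‖x‖ * ‖y‖ := by gcongr

lemma norm_add_mul_le_of_norm_le_one (B E : 𝕜) {r : 𝕜} (hr : ‖r‖ ≤ 1) :
    ‖B + E * r‖ ≤ ‖B‖ + ‖E‖ := by
  refine (norm_add_le _ _).trans (add_le_add_right ?_ _)
  rw [norm_mul]
  exact mul_le_of_le_one_right (norm_nonneg E) hr

lemma norm_div_le_one_of_norm_le {x y : 𝕜} (h : ‖x‖ ≤ ‖y‖) : ‖x / y‖ ≤ 1 := by
  rw [norm_div]
  exact div_le_one_of_le₀ h (norm_nonneg y)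

end NormedField

def CubicKernel {K : Type*} [CommRing K] (A B C E g d : K) : Prop :=
  C * g * d = (B * g + A) * d ^ 2 + E * d ^ 3 + B * g ^ 2

lemma kernel_iff_cubicKernel (a lam : ℝ) (g d : ℂ) :
    Kernel a lam g d ↔ CubicKernel ((lam:ℂ)*((a:ℂ)^2+(1-(a:ℂ))^2))
      ((1-(lam:ℂ))*(1-(a:ℂ))*(a:ℂ))
      (1 - ((1-(lam:ℂ))*((1-(a:ℂ))^2+(a:ℂ)^2) + (lam:ℂ)*(a:ℂ)*(1-(a:ℂ))))
      ((lam:ℂ)*(1-(a:ℂ))*(a:ℂ)) g d :=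
  Iff.rfl

namespace CubicKernel

variable {𝕜 : Type*} [NormedField 𝕜] {A B C E w w' g d : 𝕜}

lemma quadratic_div_eq (h : CubicKernel A B C E g d) (hg : g ≠ 0) :
    A * (d / g) ^ 2 - C * (d / g) + B = -g * ((d / g) ^ 2 * (B + E * (d / g))) := by
  unfold CubicKernel at h
  field_simp
  linear_combination -h

lemma reversed_quadratic_div_eq (h : CubicKernel A B C E g d) (hd : d ≠ 0) :
    B * (g / d) ^ 2 - C * (g / d) + A = -d * (B * (g / d) + E) := by
  unfold CubicKernel at h
  field_simp
  linear_combination -h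

lemma norm_div_sub_root_le (h : CubicKernel A B C E g d) (hA : A ≠ 0)
    (hC : C = A * (w + w')) (hB : B = A * (w * w')) (hw' : 1 < ‖w'‖)
    (hg : g ≠ 0) (hdg : ‖d‖ ≤ ‖g‖) :
    ‖d / g - w‖ ≤ (‖B‖ + ‖E‖) / (‖A‖ * (‖w'‖ - 1)) * ‖g‖ := by
  set r := d / g
  have hr : ‖r‖ ≤ 1 := norm_div_le_one_of_norm_le hdg
  have hfactor : A * (r - w) * (r - w') = -g * (r ^ 2 * (B + E * r)) := by
    linear_combination h.quadratic_div_eq hg + r * hC - hB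
  have hsep : ‖w'‖ - 1 ≤ ‖r - w'‖ := by
    rw [norm_sub_rev]
    linarith [norm_sub_norm_le w' r]
  calc ‖r - w‖ ≤ ‖A * (r - w) * (r - w')‖ / (‖A‖ * (‖w'‖ - 1)) :=
        norm_le_norm_mul_mul_div hA (by linarith) hsep
    _ = ‖g‖ * (‖r‖ ^ 2 * ‖B + E * r‖) / (‖A‖ * (‖w'‖ - 1)) := by
        rw [hfactor, norm_mul, norm_neg, norm_mul, norm_pow]
    _ ≤ ‖g‖ * (1 * (‖B‖ + ‖E‖)) / (‖A‖ * (‖w'‖ - 1)) := by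
        gcongr
        · exact pow_le_one₀ (norm_nonneg r) hr
        · exact norm_add_mul_le_of_norm_le_one B E hr
    _ = (‖B‖ + ‖E‖) / (‖A‖ * (‖w'‖ - 1)) * ‖g‖ := by ring

lemma norm_div_sub_inv_root_le (h : CubicKernel A B C E g d) (hA : A ≠ 0)
    (hC : C = A * (w + w')) (hB : B = A * (w * w')) (hw : ‖w‖ < 1) (hw' : w' ≠ 0)
    (hd : d ≠ 0) (hgd : ‖g‖ ≤ ‖d‖) :
    ‖g / d - 1 / w'‖ ≤ (‖B‖ + ‖E‖) / (‖A * w'‖ * (1 - ‖w‖)) * ‖d‖ := by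
  set s := g / d
  have hs : ‖s‖ ≤ 1 := norm_div_le_one_of_norm_le hgd
  have hfactor : A * w' * (s - 1 / w') * (w * s - 1) = -d * (B * s + E) := by
    have := h.reversed_quadratic_div_eq hd
    field_simp
    linear_combination this - s ^ 2 * hB + s * hC
  have hsep : 1 - ‖w‖ ≤ ‖w * s - 1‖ := by
    have hws : ‖w * s‖ ≤ ‖w‖ := by
      rw [norm_mul]
      exact mul_le_of_le_one_right (norm_nonneg w) hs
    rw [norm_sub_rev]
    linarith [norm_sub_norm_le (1 : 𝕜) (w * s), norm_one (α := 𝕜)]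
  calc ‖s - 1 / w'‖ ≤ ‖A * w' * (s - 1 / w') * (w * s - 1)‖ / (‖A * w'‖ * (1 - ‖w‖)) :=
        norm_le_norm_mul_mul_div (mul_ne_zero hA hw') (by linarith) hsep
    _ = ‖d‖ * ‖E + B * s‖ / (‖A * w'‖ * (1 - ‖w‖)) := by
        rw [hfactor, norm_mul, norm_neg, add_comm]
    _ ≤ ‖d‖ * (‖E‖ + ‖B‖) / (‖A * w'‖ * (1 - ‖w‖)) := by
        gcongr
        exact norm_add_mul_le_of_norm_le_one E B hs
    _ = (‖B‖ + ‖E‖) / (‖A * w'‖ * (1 - ‖w‖)) * ‖d‖ := by ring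

end CubicKernel

theorem stmt11_general (a lam : ℝ) (hl : 0 < lam)
    (g d ghat : ℕ → ℂ)
    (hg : ∀ n, 0 < ‖g n‖ ∧ ‖g n‖ < 1)
    (hg0 : Filter.Tendsto g Filter.atTop (nhds 0))
    (hd : ∀ n, 0 < ‖d n‖ ∧ ‖d n‖ < ‖g n‖ ∧
      Kernel a lam (g n) (d n))
    (hghat : ∀ n, 0 < ‖ghat n‖ ∧
      ‖ghat n‖ < ‖d n‖ ∧ Kernel a lam (ghat n) (d n))
    (w what : ℂ)
    (hw : (lam:ℂ)*((a:ℂ)^2+(1-(a:ℂ))^2) * w^2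
        - (1 - ((1-(lam:ℂ))*((1-(a:ℂ))^2+(a:ℂ)^2) + (lam:ℂ)*(a:ℂ)*(1-(a:ℂ)))) * w
        + (1-(lam:ℂ))*(1-(a:ℂ))*(a:ℂ) = 0)
    (hwhat : (lam:ℂ)*((a:ℂ)^2+(1-(a:ℂ))^2) * what^2
        - (1 - ((1-(lam:ℂ))*((1-(a:ℂ))^2+(a:ℂ)^2) + (lam:ℂ)*(a:ℂ)*(1-(a:ℂ)))) * what
        + (1-(lam:ℂ))*(1-(a:ℂ))*(a:ℂ) = 0)
    (hw1 : ‖w‖ < 1) (hwhat1 : 1 < ‖what‖) :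
    Filter.Tendsto (fun n => d n / g n) Filter.atTop (nhds w) ∧
    Filter.Tendsto (fun n => ghat n / d n) Filter.atTop (nhds (1 / what)) := by
  have hA : (lam:ℂ)*((a:ℂ)^2+(1-(a:ℂ))^2) ≠ 0 := by
    have : 0 < lam * (a ^ 2 + (1 - a) ^ 2) := by nlinarith [sq_nonneg a, sq_nonneg (a - 1 / 2)]
    exact_mod_cast this.ne'
  obtain ⟨hC, hB⟩ := coeffs_eq_of_quadratic_roots hw hwhat
    (ne_of_apply_ne norm (by linarith))
  have hd0 : Tendsto d atTop (𝓝 0) :=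
    squeeze_zero_norm (fun n => (hd n).2.1.le) (tendsto_zero_iff_norm_tendsto_zero.mp hg0)
  constructor
  · exact tendsto_of_norm_sub_le_mul _ hg0 fun n =>
      ((kernel_iff_cubicKernel a lam _ _).mp (hd n).2.2).norm_div_sub_root_le hA hC hB hwhat1
        (norm_pos_iff.mp (hg n).1) (hd n).2.1.le
  · exact tendsto_of_norm_sub_le_mul _ hd0 fun n =>
      ((kernel_iff_cubicKernel a lam _ _).mp (hghat n).2.2).norm_div_sub_inv_root_le hA hC hB
        hw1 (norm_pos_iff.mp (by linarith)) (norm_pos_iff.mp (hd n).1) (hghat n).2.1.le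

/-- limiting ratios of the compensation parameters: if γ_n → 0,
then δ_n/γ_n → w and γ̂_n/δ_n → 1/ŵ, where w, ŵ are the roots of
λ(a²+ā²)w² − (1 − (λ̄(ā²+a²)+λaā))w + λ̄āa = 0 with |w| < 1 < |ŵ|. -/
theorem stmt11 (a lam : ℝ) (ha : 0 < a) (ha1 : a < 1) (hl : 0 < lam) (hl1 : lam < 1)
    (g d ghat : ℕ → ℂ)
    (hg : ∀ n, 0 < ‖g n‖ ∧ ‖g n‖ < 1)
    (hg0 : Filter.Tendsto g Filter.atTop (nhds 0))
    (hd : ∀ n, 0 < ‖d n‖ ∧ ‖d n‖ < ‖g n‖ ∧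
      Kernel a lam (g n) (d n))
    (hdu : ∀ n, ∀ z : ℂ, 0 < ‖z‖ → ‖z‖ < ‖g n‖ →
      Kernel a lam (g n) z → z = d n)
    (hghat : ∀ n, 0 < ‖ghat n‖ ∧
      ‖ghat n‖ < ‖d n‖ ∧ Kernel a lam (ghat n) (d n))
    (hghatu : ∀ n, ∀ z : ℂ, 0 < ‖z‖ → ‖z‖ < ‖d n‖ →
      Kernel a lam z (d n) → z = ghat n)
    (w what : ℂ)
    (hw : (lam:ℂ)*((a:ℂ)^2+(1-(a:ℂ))^2) * w^2
        - (1 - ((1-(lam:ℂ))*((1-(a:ℂ))^2+(a:ℂ)^2) + (lam:ℂ)*(a:ℂ)*(1-(a:ℂ)))) * w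
        + (1-(lam:ℂ))*(1-(a:ℂ))*(a:ℂ) = 0)
    (hwhat : (lam:ℂ)*((a:ℂ)^2+(1-(a:ℂ))^2) * what^2
        - (1 - ((1-(lam:ℂ))*((1-(a:ℂ))^2+(a:ℂ)^2) + (lam:ℂ)*(a:ℂ)*(1-(a:ℂ)))) * what
        + (1-(lam:ℂ))*(1-(a:ℂ))*(a:ℂ) = 0)
    (hw1 : ‖w‖ < 1) (hwhat1 : 1 < ‖what‖) :
    Filter.Tendsto (fun n => d n / g n) Filter.atTop (nhds w) ∧
    Filter.Tendsto (fun n => ghat n / d n) Filter.atTop (nhds (1 / what)) :=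
  stmt11_general a lam hl g d ghat hg hg0 hd hghat w what hw hwhat hw1 hwhat1
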